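/- arXiv:1905.13405 — 2 statements merged into one kernel-verified Lean document; each statement's English description precedes it below -/
import Mathlib

section
/- The backpropagated gradient of a batch normalization layer is orthogonal to the input activation and zero-mean: for f ∈ ℝᴺ with empirical mean μ and standard deviation σ > 0, define the BN output as c₀·(f − μ𝟙)/σ + c₁𝟙. Then the Jacobian-transpose applied to any g ∈ ℝᴺ equals (c₀/σ)·P g, where P is the orthogonal projection onto the orthogonal complement of span{f, 𝟙}; in particular ⟨J g, f⟩ = 0 and ⟨J g, 𝟙⟩ = 0. -/
open scoped RealInnerProductSpace

/-- Empirical mean of a vector in ℝᴺ. -/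
noncomputable def bnMean {N : ℕ} (v : EuclideanSpace ℝ (Fin N)) : ℝ :=
  (∑ i, v i) / N

/-- Empirical standard deviation of a vector in ℝᴺ. -/
noncomputable def bnStd {N : ℕ} (v : EuclideanSpace ℝ (Fin N)) : ℝ :=
  Real.sqrt ((∑ i, (v i - bnMean v) ^ 2) / N)

/-- The all-ones vector in ℝᴺ. -/
noncomputable def onesVec (N : ℕ) : EuclideanSpace ℝ (Fin N) := WithLp.toLp 2 (fun _ => 1)

/-- The batch-normalization map `BN(v) = c₀ (v − μ(v) 𝟙)/σ(v) + c₁ 𝟙`. -/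
noncomputable def bn {N : ℕ} (c₀ c₁ : ℝ) (v : EuclideanSpace ℝ (Fin N)) :
    EuclideanSpace ℝ (Fin N) :=
  c₀ • (bnStd v)⁻¹ • (v - bnMean v • onesVec N) + c₁ • onesVec N

/-!
Writing `P` for the orthogonal projection onto `𝟙ᗮ`, we have `f - μ𝟙 = P f` and `σ = ‖P f‖ / √N`,
so `BN(v) = c₀ √N · n(P v) + c₁ 𝟙` with `n(w) = w / ‖w‖`. The derivative of `n` at `w ≠ 0` is
`‖w‖⁻¹` times the projection onto `wᗮ`, so by the chain rule `D BN(f) = (c₀/σ) P_{qᗮ} P_{𝟙ᗮ}` with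
`q = P f ⟂ 𝟙`. For orthogonal lines this composite is the projection onto `span {q, 𝟙}ᗮ`, and
`span {q, 𝟙} = span {f, 𝟙}`. A multiple of an orthogonal projection is self-adjoint, so `J = D BN(f)`.
-/

section
variable {E : Type*} [NormedAddCommGroup E] [InnerProductSpace ℝ E]

theorem hasFDerivAt_norm_of_ne_zero {x : E} (hx : x ≠ 0) :
    HasFDerivAt (fun v : E => ‖v‖) (‖x‖⁻¹ • innerSL ℝ x) x := by
  have hsq : ‖x‖ ^ 2 ≠ 0 := by positivity
  convert (hasStrictFDerivAt_norm_sq x).hasFDerivAt.sqrt hsq using 1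
  · funext v
    rw [Real.sqrt_sq (norm_nonneg v)]
  · rw [Real.sqrt_sq (norm_nonneg x)]
    ext h
    simp only [smul_apply, coe_innerSL_apply, smul_eq_mul, nsmul_eq_mul,
      Nat.cast_ofNat]
    field_simp

theorem hasFDerivAt_inv_norm_smul {x : E} (hx : x ≠ 0) :
    HasFDerivAt (fun v : E => ‖v‖⁻¹ • v) (‖x‖⁻¹ • (ℝ ∙ x)ᗮ.starProjection) x := by
  have hinv := (hasDerivAt_inv (norm_ne_zero_iff.mpr hx)).comp_hasFDerivAt x
    (hasFDerivAt_norm_of_ne_zero hx)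
  refine (hinv.smul (hasFDerivAt_id x)).congr_fderiv (ContinuousLinearMap.ext fun h => ?_)
  simp only [Function.comp_apply, id_eq, add_apply,
    smul_apply, ContinuousLinearMap.id_apply,
    ContinuousLinearMap.smulRight_apply, coe_innerSL_apply, smul_eq_mul,
    Submodule.starProjection_orthogonal_val, Submodule.starProjection_singleton,
    Real.ringHom_apply]
  module

end

theorem Submodule.IsOrtho.orthogonal_starProjection_comp {𝕜 E : Type*} [RCLike 𝕜]
    [NormedAddCommGroup E] [InnerProductSpace 𝕜 E] {K L : Submodule 𝕜 E}
    [K.HasOrthogonalProjection] [L.HasOrthogonalProjection] [(K ⊔ L).HasOrthogonalProjection]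
    (hKL : K ⟂ L) :
    Kᗮ.starProjection ∘L Lᗮ.starProjection = (K ⊔ L)ᗮ.starProjection := by
  refine ContinuousLinearMap.ext fun v => ?_
  rw [ContinuousLinearMap.comp_apply]
  refine (Submodule.eq_starProjection_of_mem_orthogonal ?_ ?_).symm
  · rw [← Submodule.inf_orthogonal]
    refine ⟨Kᗮ.starProjection_apply_mem _, ?_⟩
    rw [Submodule.starProjection_orthogonal_val]
    exact sub_mem (Lᗮ.starProjection_apply_mem v) (hKL (K.starProjection_apply_mem _))
  · refine Submodule.le_orthogonal_orthogonal _ ?_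
    have hv : v - Kᗮ.starProjection (Lᗮ.starProjection v)
        = L.starProjection v + K.starProjection (Lᗮ.starProjection v) := by
      simp only [Submodule.starProjection_orthogonal_val]
      abel
    rw [hv]
    exact add_mem (Submodule.mem_sup_right (L.starProjection_apply_mem v))
      (Submodule.mem_sup_left (K.starProjection_apply_mem _))

theorem Submodule.span_pair_sub_smul {R M : Type*} [Ring R] [AddCommGroup M] [Module R M]
    (x y : M) (c : R) : span R {x - c • y, y} = span R {x, y} := by
  have hx : x ∈ span R {x, y} := subset_span (by simp)
  have hy : y ∈ span R {x, y} := subset_span (by simp)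
  have hx' : x - c • y ∈ span R {x - c • y, y} := subset_span (by simp)
  have hy' : y ∈ span R {x - c • y, y} := subset_span (by simp)
  apply le_antisymm <;> rw [span_le, Set.insert_subset_iff, Set.singleton_subset_iff]
  · exact ⟨sub_mem hx (smul_mem _ c hy), hy⟩
  · exact ⟨by simpa using add_mem hx' (smul_mem _ c hy'), hy'⟩

@[simp] lemma onesVec_apply {N : ℕ} (i : Fin N) : onesVec N i = 1 := rfl

lemma inner_onesVec_left {N : ℕ} (v : EuclideanSpace ℝ (Fin N)) :
    ⟪onesVec N, v⟫ = ∑ i, v i := by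
  simp [PiLp.inner_apply]

lemma norm_onesVec_sq (N : ℕ) : ‖onesVec N‖ ^ 2 = N := by
  rw [← real_inner_self_eq_norm_sq, inner_onesVec_left]
  simp

lemma sub_bnMean_smul_onesVec {N : ℕ} (v : EuclideanSpace ℝ (Fin N)) :
    v - bnMean v • onesVec N = (ℝ ∙ onesVec N)ᗮ.starProjection v := by
  rw [Submodule.starProjection_orthogonal_val, Submodule.starProjection_singleton,
    inner_onesVec_left, norm_onesVec_sq, RCLike.ofReal_real_eq_id, id, bnMean]

lemma bnStd_eq_norm_div_sqrt {N : ℕ} (v : EuclideanSpace ℝ (Fin N)) :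
    bnStd v = ‖v - bnMean v • onesVec N‖ / √N := by
  rw [bnStd, Real.sqrt_div' _ N.cast_nonneg, EuclideanSpace.norm_eq]
  simp [sq_abs]

lemma bn_eq_smul_inv_norm_smul {N : ℕ} (c₀ c₁ : ℝ) :
    bn c₀ c₁ = fun v : EuclideanSpace ℝ (Fin N) =>
      (c₀ * √N) • (‖(ℝ ∙ onesVec N)ᗮ.starProjection v‖⁻¹ • (ℝ ∙ onesVec N)ᗮ.starProjection v)
        + c₁ • onesVec N := by
  funext v
  rw [bn, bnStd_eq_norm_div_sqrt, sub_bnMean_smul_onesVec, inv_div, smul_smul, smul_smul,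
    div_eq_mul_inv, mul_assoc]

lemma hasFDerivAt_bn {N : ℕ} (c₀ c₁ : ℝ) {f : EuclideanSpace ℝ (Fin N)} (hσ : 0 < bnStd f) :
    HasFDerivAt (bn c₀ c₁)
      ((c₀ / bnStd f) • (Submodule.span ℝ {f, onesVec N})ᗮ.starProjection) f := by
  set P := (ℝ ∙ onesVec N)ᗮ.starProjection
  set q := P f
  have hσq : bnStd f = ‖q‖ / √N := by rw [bnStd_eq_norm_div_sqrt, sub_bnMean_smul_onesVec]
  have hq : q ≠ 0 := fun hq => by simp [hσq, hq] at hσ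
  have hortho : (ℝ ∙ q) ⟂ (ℝ ∙ onesVec N) :=
    Submodule.isOrtho_iff_le.2 <|
      (Submodule.span_singleton_le_iff_mem _ _).2 (Submodule.starProjection_apply_mem _ f)
  have hspan : (ℝ ∙ q) ⊔ (ℝ ∙ onesVec N) = Submodule.span ℝ {f, onesVec N} := by
    rw [← Submodule.span_insert, ← Submodule.span_pair_sub_smul f (onesVec N) (bnMean f),
      sub_bnMean_smul_onesVec]
  have hD := ((hasFDerivAt_inv_norm_smul hq).comp f P.hasFDerivAt).const_smul (c₀ * √N)
    |>.add_const (c₁ • onesVec N)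
  rw [bn_eq_smul_inv_norm_smul]
  refine hD.congr_fderiv ?_
  rw [ContinuousLinearMap.smul_comp, hortho.orthogonal_starProjection_comp, smul_smul,
    hσq, div_div_eq_mul_div, div_eq_mul_inv]
  -- `rw` would fail here: the projection's instance argument depends on the submodule
  simp only [hspan]

theorem bn_backprop_general {N : ℕ}
    (f : EuclideanSpace ℝ (Fin N)) (c₀ c₁ : ℝ)
    (hσ : 0 < bnStd f)
    (J : EuclideanSpace ℝ (Fin N) →L[ℝ] EuclideanSpace ℝ (Fin N))
    (hJ : J = ContinuousLinearMap.adjoint (fderiv ℝ (bn c₀ c₁) f)) :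
    ∀ g : EuclideanSpace ℝ (Fin N),
      J g = (c₀ / bnStd f) •
          (Submodule.orthogonalProjection ((Submodule.span ℝ {f, onesVec N})ᗮ) g :
            EuclideanSpace ℝ (Fin N)) ∧
        ⟪J g, f⟫ = 0 ∧ ⟪J g, onesVec N⟫ = 0 := by
  intro g
  set K := Submodule.span ℝ {f, onesVec N}
  have hJK : J = (c₀ / bnStd f) • Kᗮ.starProjection := by
    rw [hJ, (hasFDerivAt_bn c₀ c₁ hσ).fderiv]
    exact ((IsSelfAdjoint.all _).smul (isSelfAdjoint_starProjection Kᗮ)).adjoint_eq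
  have hJg : J g ∈ Kᗮ := by
    rw [hJK]
    exact Kᗮ.smul_mem _ (Kᗮ.starProjection_apply_mem g)
  refine ⟨by rw [hJK]; rfl, ?_, ?_⟩ <;>
    exact K.inner_left_of_mem_orthogonal (Submodule.subset_span (by simp)) hJg

/-- The backpropagated gradient of a batch-normalization layer (transpose of its
Jacobian applied to a top-down gradient `g`) equals `(c₀/σ) P g`, where `P` is the
orthogonal projection onto the orthogonal complement of `span {f, 𝟙}`; in
particular it is orthogonal to `f` and zero-mean. -/
theorem bn_backprop {N : ℕ} (hN : 0 < N)
    (f : EuclideanSpace ℝ (Fin N)) (c₀ c₁ : ℝ)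
    (hσ : 0 < bnStd f)
    (J : EuclideanSpace ℝ (Fin N) →L[ℝ] EuclideanSpace ℝ (Fin N))
    (hJ : J = ContinuousLinearMap.adjoint (fderiv ℝ (bn c₀ c₁) f)) :
    ∀ g : EuclideanSpace ℝ (Fin N),
      J g = (c₀ / bnStd f) •
          (Submodule.orthogonalProjection ((Submodule.span ℝ {f, onesVec N})ᗮ) g :
            EuclideanSpace ℝ (Fin N)) ∧
        ⟪J g, f⟫ = 0 ∧ ⟪J g, onesVec N⟫ = 0 :=
  bn_backprop_general f c₀ c₁ hσ J hJ
end

section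
/- Single-node convergence step: let w, w* be unit vectors in ℝⁿ with angle θ ≤ θ₀ < π/2, and let P = I − w wᵀ. For the update w⁺ = w + η d P w* with η d ≤ 1 and d > 0, the projection onto the orthogonal complement of w* satisfies ‖P* w⁺‖ ≤ (1 − η d cos θ)·‖P* w‖, where P* = I − w*(w*)ᵀ. -/
open scoped RealInnerProductSpace

/-- Single-node convergence step: for the update `w⁺ = w + η d P w*`,
`‖P* w⁺‖ ≤ (1 − η d cos θ) ‖P* w‖`. -/
theorem single_node_step {n : ℕ}
    (w wstar : EuclideanSpace ℝ (Fin n))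
    (hw : ‖w‖ = 1) (hws : ‖wstar‖ = 1)
    (η d θ θ₀ : ℝ) (hη : 0 < η) (hd : 0 < d) (hηd : η * d ≤ 1)
    (hθ : θ = Real.arccos ⟪w, wstar⟫)
    (hθθ₀ : θ ≤ θ₀) (hθ₀ : θ₀ < Real.pi / 2)
    (P Pstar : EuclideanSpace ℝ (Fin n) → EuclideanSpace ℝ (Fin n))
    (hP : ∀ x, P x = x - ⟪w, x⟫ • w)
    (hPstar : ∀ x, Pstar x = x - ⟪wstar, x⟫ • wstar)
    (wplus : EuclideanSpace ℝ (Fin n))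
    (hwplus : wplus = w + (η * d) • P wstar) :
    ‖Pstar wplus‖ ≤ (1 - η * d * Real.cos θ) * ‖Pstar w‖ := by
  set c : ℝ := ⟪w, wstar⟫ with hc
  have habs : |c| ≤ 1 := by
    have := abs_real_inner_le_norm w wstar
    simpa [hw, hws] using this
  have hc1 : c ≤ 1 := (abs_le.mp habs).2
  have hcos : Real.cos θ = c := by
    rw [hθ, Real.cos_arccos (abs_le.mp habs).1 hc1]
  have hss : ⟪wstar, wstar⟫ = (1 : ℝ) := by
    rw [real_inner_self_eq_norm_sq, hws]; norm_num
  have hsym : ⟪wstar, w⟫ = c := (real_inner_comm w wstar)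
  have key : Pstar wplus = (1 - η * d * c) • Pstar w := by
    rw [hPstar, hPstar, hwplus, hP]
    rw [inner_add_right, inner_smul_right, inner_sub_right, inner_smul_right,
      hss, hsym, hc.symm]
    module
  have hnn : 0 ≤ 1 - η * d * c := by
    nlinarith [mul_nonneg (mul_pos hη hd).le (by linarith : (0:ℝ) ≤ 1 - c)]
  rw [key, norm_smul, Real.norm_eq_abs, abs_of_nonneg hnn, hcos]
end
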